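/- arXiv:2406.11347 — 3 statements merged into one kernel-verified Lean document; each statement's English description precedes it below -/
import Mathlib

section
/- Let $X$ be a strictly stationary ergodic process with values in $\mathbb{R}^N$, let $\widetilde\beta\subseteq\mathbb{R}^N$ be measurable, and let $\tau_{\widetilde\beta}(X,t)=\min\{s\ge 0: X_{t+s}\in\widetilde\beta\}$ be the forward hitting time and $\tau^-_{\widetilde\beta}(X,t)=\min\{s\ge 0: X_{t-s}\in\widetilde\beta\}$ the backward hitting time, and define the transit time $\tau^{\pm}_{\widetilde\beta}(X,t)=\max(\theta^+-\theta^- -1,0)$ where $\theta^-=\max\{s\le t: X_s\in\widetilde\beta\}$ and $\theta^+=\min\{s\ge t : X_s\in\widetilde\beta\}$. If $\mathbb{E}[\tau_{\widetilde\beta}(X,t)^\alpha]<\infty$ for some $\alpha\in[0,\infty)$, then $\mathbb{E}[\tau^{\pm}_{\widetilde\beta}(X,t)^\alpha]\le (\alpha+1)\,\mathbb{E}[\tau_{\widetilde\beta}(X,t)^\alpha]<\infty$. -/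
open MeasureTheory Filter
open scoped ENNReal

/-- Forward hitting time `τ_B(x,t) = min {s ≥ 0 : x (t+s) ∈ B}` (as `ℝ≥0∞`, `∞` if none). -/
noncomputable def fwdHit {X : Type*} (B : Set X) (t : ℤ) (x : ℤ → X) : ℝ≥0∞ :=
  sInf {r : ℝ≥0∞ | ∃ s : ℕ, r = s ∧ x (t + s) ∈ B}

/-- Backward hitting time `τ⁻_B(x,t) = min {s ≥ 0 : x (t-s) ∈ B}`. -/
noncomputable def bwdHit {X : Type*} (B : Set X) (t : ℤ) (x : ℤ → X) : ℝ≥0∞ :=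
  sInf {r : ℝ≥0∞ | ∃ s : ℕ, r = s ∧ x (t - s) ∈ B}

/-- Transit time `τ±_B(x,t) = max(θ⁺ - θ⁻ - 1, 0) = τ_B(x,t) + τ⁻_B(x,t) - 1`
(truncated subtraction). -/
noncomputable def transit {X : Type*} (B : Set X) (t : ℤ) (x : ℤ → X) : ℝ≥0∞ :=
  fwdHit B t x + bwdHit B t x - 1

/-!
Split the event `x t ∉ B` into the floors `H (i+1) (j+1)` (`skyscraperFloor`) on which the
backward and forward hitting times are `i + 1` and `j + 1`; there the transit time is `i + j + 1`.
Shifting time by `i` maps `H (i+1) (j+1)` onto `H 1 (i+j+1)`, so by stationarity all `n + 1`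
floors of the tower of height `n + 1` have the same probability `q n`. Hence the transit moment is
`∑ₙ (n+1) (n+1)^α q n`, the forward moment is at least `∑ₙ (∑_{k ≤ n} (k+1)^α) q n`, and
`(n+1)^(α+1) ≤ (α+1) ∑_{k ≤ n} (k+1)^α` by comparing the sum with `∫₀^{n+1} u^α du`.
The floors cover `x t ∉ B` up to a null set: backward hitting times are a.s. finite because the
events `{τ⁻(x, t+m) = ∞}` decrease in `m`, have constant probability, and their intersection forces
`τ(x, t) = ∞`.
-/

open Finset

theorem tsum_prod_mul_eq_tsum_sum_antidiagonal (c : ℕ → ℕ → ℝ≥0∞) (q : ℕ → ℝ≥0∞) :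
    ∑' p : ℕ × ℕ, c p.1 p.2 * q (p.1 + p.2) =
      ∑' n, (∑ p ∈ antidiagonal n, c p.1 p.2) * q n := by
  rw [← HasAntidiagonal.sigmaAntidiagonalEquivProd.tsum_eq, ENNReal.tsum_sigma']
  refine tsum_congr fun n => ?_
  simp only [HasAntidiagonal.sigmaAntidiagonalEquivProd_apply]
  rw [Finset.tsum_subtype (antidiagonal n) fun p => c p.1 p.2 * q (p.1 + p.2), sum_mul]
  exact sum_congr rfl fun p hp => by rw [mem_antidiagonal.mp hp]

theorem natCast_rpow_add_one_le_mul_sum {α : ℝ} (hα : 0 ≤ α) (n : ℕ) :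
    (n : ℝ) ^ (α + 1) ≤ (α + 1) * ∑ k ∈ range n, ((k : ℝ) + 1) ^ α := by
  have hmono : MonotoneOn (fun u : ℝ => u ^ α) (Set.Icc 0 (0 + n)) :=
    fun a ha b _ hab => Real.rpow_le_rpow ha.1 hab hα
  have h := hmono.integral_le_sum
  rw [zero_add, integral_rpow (Or.inl (by linarith)), Real.zero_rpow (by linarith), sub_zero,
    div_le_iff₀ (by linarith)] at h
  simpa [mul_comm] using h

theorem sum_antidiagonal_rpow_le {α : ℝ} (hα : 0 ≤ α) (n : ℕ) :
    ∑ p ∈ antidiagonal n, ((p.1 + p.2 + 1 : ℕ) : ℝ≥0∞) ^ α ≤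
      ENNReal.ofReal (α + 1) * ∑ p ∈ antidiagonal n, ((p.2 + 1 : ℕ) : ℝ≥0∞) ^ α := by
  have hcast : ∀ k : ℕ, (k : ℝ≥0∞) ^ α = ENNReal.ofReal ((k : ℝ) ^ α) := fun k => by
    rw [← ENNReal.ofReal_natCast, ENNReal.ofReal_rpow_of_nonneg (Nat.cast_nonneg k) hα]
  have hlhs : ∑ p ∈ antidiagonal n, ((p.1 + p.2 + 1 : ℕ) : ℝ≥0∞) ^ α =
      ENNReal.ofReal (((n + 1 : ℕ) : ℝ) ^ (α + 1)) := by
    rw [sum_congr rfl fun p hp => by rw [mem_antidiagonal.mp hp], sum_const, Nat.card_antidiagonal,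
      nsmul_eq_mul, hcast, ← ENNReal.ofReal_natCast, ← ENNReal.ofReal_mul (by positivity),
      Real.rpow_add_one (by positivity), mul_comm]
  have hrhs : ∑ p ∈ antidiagonal n, ((p.2 + 1 : ℕ) : ℝ≥0∞) ^ α =
      ENNReal.ofReal (∑ k ∈ range (n + 1), ((k : ℝ) + 1) ^ α) := by
    rw [← Nat.sum_antidiagonal_swap, Nat.sum_antidiagonal_eq_sum_range_succ_mk,
      ENNReal.ofReal_sum_of_nonneg fun _ _ => by positivity]
    exact sum_congr rfl fun k _ => by rw [Prod.snd_swap, hcast]; push_cast; rfl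
  rw [hlhs, hrhs, ← ENNReal.ofReal_mul (by linarith)]
  exact ENNReal.ofReal_le_ofReal (natCast_rpow_add_one_le_mul_sum hα (n + 1))

noncomputable def firstHit (p : ℕ → Prop) : ℝ≥0∞ :=
  sInf {r | ∃ s : ℕ, r = s ∧ p s}

section FirstHit

variable {p : ℕ → Prop}

open Classical in
theorem firstHit_eq_find (h : ∃ s, p s) : firstHit p = Nat.find h :=
  le_antisymm (sInf_le ⟨_, rfl, Nat.find_spec h⟩)
    (le_sInf <| by rintro _ ⟨s, rfl, hs⟩; exact_mod_cast Nat.find_min' h hs)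

theorem firstHit_eq_top_iff : firstHit p = ⊤ ↔ ∀ s, ¬p s := by
  refine ⟨fun h s hs => ?_, fun h => ?_⟩
  · classical
    exact ENNReal.natCast_ne_top _ ((firstHit_eq_find ⟨s, hs⟩).symm.trans h)
  · rw [firstHit, sInf_eq_top]
    rintro _ ⟨s, -, hs⟩
    exact absurd hs (h s)

theorem firstHit_eq_natCast_iff {j : ℕ} : firstHit p = j ↔ p j ∧ ∀ s < j, ¬p s := by
  classical
  by_cases h : ∃ s, p s
  · rw [firstHit_eq_find h, Nat.cast_inj, Nat.find_eq_iff]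
  · rw [firstHit_eq_top_iff.mpr (not_exists.mp h)]
    exact iff_of_false (ENNReal.top_ne_natCast j) fun hj => h ⟨j, hj.1⟩

theorem exists_firstHit_eq_natCast (h : firstHit p ≠ ⊤) : ∃ j : ℕ, firstHit p = j := by
  classical
  obtain ⟨s, hs⟩ := not_forall_not.mp (mt firstHit_eq_top_iff.mpr h)
  exact ⟨_, firstHit_eq_find ⟨s, hs⟩⟩

theorem firstHit_eq_iInf [DecidablePred p] :
    firstHit p = ⨅ s : ℕ, if p s then (s : ℝ≥0∞) else ⊤ := by
  have : {r : ℝ≥0∞ | ∃ s : ℕ, r = s ∧ p s} = (Nat.cast : ℕ → ℝ≥0∞) '' {s | p s} := by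
    ext r
    exact ⟨fun ⟨s, hr, hs⟩ => ⟨s, hs, hr.symm⟩, fun ⟨s, hs, hr⟩ => ⟨s, hr.symm, hs⟩⟩
  simp_rw [firstHit, this, sInf_image, ← iInf_eq_if]
  rfl

theorem measurable_firstHit {Ω : Type*} [MeasurableSpace Ω] {P : Ω → ℕ → Prop}
    (hP : ∀ s, MeasurableSet {ω | P ω s}) : Measurable fun ω => firstHit (P ω) := by
  classical
  simp_rw [firstHit_eq_iInf]
  exact .iInf fun s => Measurable.ite (hP s) measurable_const measurable_const

end FirstHit

section Hitting

variable {X : Type*} {B : Set X} {t : ℤ} {x : ℤ → X}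

theorem fwdHit_eq_firstHit : fwdHit B t x = firstHit fun s => x (t + s) ∈ B := rfl

theorem bwdHit_eq_firstHit : bwdHit B t x = firstHit fun s => x (t - s) ∈ B := rfl

theorem fwdHit_eq_zero_iff : fwdHit B t x = 0 ↔ x t ∈ B := by
  rw [← Nat.cast_zero, fwdHit_eq_firstHit, firstHit_eq_natCast_iff]
  simp

theorem bwdHit_eq_zero_iff : bwdHit B t x = 0 ↔ x t ∈ B := by
  rw [← Nat.cast_zero, bwdHit_eq_firstHit, firstHit_eq_natCast_iff]
  simp

theorem transit_eq_zero_of_mem (h : x t ∈ B) : transit B t x = 0 := by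
  simp [transit, fwdHit_eq_zero_iff.mpr h, bwdHit_eq_zero_iff.mpr h]

def leftShift (x : ℤ → X) : ℤ → X := fun u => x (u + 1)

theorem leftShift_iterate_apply (m : ℕ) (x : ℤ → X) (u : ℤ) :
    leftShift^[m] x u = x (u + m) := by
  induction m generalizing u with
  | zero => simp
  | succ m ih =>
    rw [Function.iterate_succ_apply', leftShift, ih]
    push_cast
    ring_nf

theorem fwdHit_leftShift_iterate (m : ℕ) :
    fwdHit B t (leftShift^[m] x) = fwdHit B (t + m) x := by
  simp only [fwdHit_eq_firstHit, leftShift_iterate_apply, add_right_comm]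

theorem bwdHit_leftShift_iterate (m : ℕ) :
    bwdHit B t (leftShift^[m] x) = bwdHit B (t + m) x := by
  simp only [bwdHit_eq_firstHit, leftShift_iterate_apply, sub_add_eq_add_sub]

def skyscraperFloor (B : Set X) (t : ℤ) (i j : ℕ) : Set (ℤ → X) :=
  {x | bwdHit B t x = i ∧ fwdHit B t x = j}

theorem mem_skyscraperFloor_iff {i j : ℕ} (hi : i ≠ 0) (hj : j ≠ 0) :
    x ∈ skyscraperFloor B t i j ↔
      x (t - i) ∈ B ∧ x (t + j) ∈ B ∧ ∀ u, t - i < u → u < t + j → x u ∉ B := by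
  rw [skyscraperFloor, Set.mem_ofPred_eq, bwdHit_eq_firstHit, fwdHit_eq_firstHit,
    firstHit_eq_natCast_iff, firstHit_eq_natCast_iff]
  constructor
  · rintro ⟨⟨hprev, hbefore⟩, hnext, hafter⟩
    refine ⟨hprev, hnext, fun u hlo hhi hu => ?_⟩
    rcases le_total u t with hut | htu
    · exact hbefore (t - u).toNat (by omega) (by rwa [show t - (t - u).toNat = u by omega])
    · exact hafter (u - t).toNat (by omega) (by rwa [show t + (u - t).toNat = u by omega])
  · rintro ⟨hprev, hnext, hbetween⟩
    exact ⟨⟨hprev, fun s hs => hbetween _ (by omega) (by omega)⟩,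
      hnext, fun s hs => hbetween _ (by omega) (by omega)⟩

theorem skyscraperFloor_succ_succ (i j : ℕ) :
    skyscraperFloor B t (i + 1) (j + 1) = skyscraperFloor B (t - i) 1 (i + j + 1) := by
  ext x
  rw [mem_skyscraperFloor_iff (by omega) (by omega), mem_skyscraperFloor_iff (by omega) (by omega)]
  push_cast
  rw [sub_sub, show t - i + (i + j + 1) = t + (j + 1) by ring]

theorem preimage_leftShift_iterate_skyscraperFloor (m i j : ℕ) :
    leftShift^[m] ⁻¹' skyscraperFloor B t i j = skyscraperFloor B (t + m) i j := by
  ext x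
  simp only [skyscraperFloor, Set.mem_preimage, Set.mem_ofPred_eq, fwdHit_leftShift_iterate,
    bwdHit_leftShift_iterate]

theorem transit_of_mem_skyscraperFloor {i j : ℕ} (hx : x ∈ skyscraperFloor B t (i + 1) (j + 1)) :
    transit B t x = (i + j + 1 : ℕ) := by
  rw [transit, hx.1, hx.2]
  push_cast
  rw [show (j : ℝ≥0∞) + 1 + (i + 1) = i + j + 1 + 1 by ring]
  exact ENNReal.add_sub_cancel_right ENNReal.one_ne_top

theorem pairwise_disjoint_skyscraperFloor_succ_succ (t : ℤ) :
    Pairwise (Function.onFun Disjoint fun p : ℕ × ℕ =>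
      skyscraperFloor B t (p.1 + 1) (p.2 + 1)) := by
  rintro ⟨i, j⟩ ⟨i', j'⟩ hne
  refine Set.disjoint_left.mpr fun x ⟨hb, hf⟩ ⟨hb', hf'⟩ => hne ?_
  have hi : i + 1 = i' + 1 := by exact_mod_cast hb.symm.trans hb'
  have hj : j + 1 = j' + 1 := by exact_mod_cast hf.symm.trans hf'
  rw [Prod.mk.injEq]
  omega

end Hitting

section Stationary

variable {X : Type*} [MeasurableSpace X] {B : Set X} {μ : Measure (ℤ → X)}

theorem measurable_fwdHit (hB : MeasurableSet B) (t : ℤ) : Measurable (fwdHit B t) :=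
  measurable_firstHit fun _ => measurable_pi_apply _ hB

theorem measurable_bwdHit (hB : MeasurableSet B) (t : ℤ) : Measurable (bwdHit B t) :=
  measurable_firstHit fun _ => measurable_pi_apply _ hB

theorem measurableSet_skyscraperFloor (hB : MeasurableSet B) (t : ℤ) (i j : ℕ) :
    MeasurableSet (skyscraperFloor B t i j) :=
  (measurable_bwdHit hB t (measurableSet_singleton _)).inter
    (measurable_fwdHit hB t (measurableSet_singleton _))

theorem MeasureTheory.MeasurePreserving.measure_skyscraperFloor_succ_succ
    (hS : MeasurePreserving leftShift μ μ) (hB : MeasurableSet B) (t : ℤ) (i j : ℕ) :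
    μ (skyscraperFloor B t (i + 1) (j + 1)) = μ (skyscraperFloor B t 1 (i + j + 1)) := by
  rw [skyscraperFloor_succ_succ, ← (hS.iterate i).measure_preimage
    (measurableSet_skyscraperFloor hB (t - i) 1 (i + j + 1)).nullMeasurableSet,
    preimage_leftShift_iterate_skyscraperFloor, sub_add_cancel]

theorem MeasureTheory.MeasurePreserving.ae_bwdHit_ne_top [IsFiniteMeasure μ]
    (hS : MeasurePreserving leftShift μ μ) (hB : MeasurableSet B) {t : ℤ}
    (hfwd : ∀ᵐ x ∂μ, fwdHit B t x ≠ ⊤) : ∀ᵐ x ∂μ, bwdHit B t x ≠ ⊤ := by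
  set E : ℕ → Set (ℤ → X) := fun m => leftShift^[m] ⁻¹' {x | bwdHit B t x = ⊤}
  have hE : ∀ m, E m = {x | ∀ s : ℕ, x (t + m - s) ∉ B} := fun m => by
    ext x
    simp only [E, Set.mem_preimage, Set.mem_ofPred_eq]
    rw [bwdHit_leftShift_iterate, bwdHit_eq_firstHit, firstHit_eq_top_iff]
  have hE_anti : Antitone E := fun a b hab x hx => by
    rw [hE] at hx ⊢
    intro s
    obtain ⟨k, rfl⟩ := Nat.exists_eq_add_of_le hab
    convert hx (s + k) using 3
    push_cast
    ring
  have h_top : MeasurableSet {x | bwdHit B t x = ⊤} :=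
    measurable_bwdHit hB t (measurableSet_singleton ⊤)
  have hE_meas : ∀ m, μ (E m) = μ (E 0) := fun m =>
    (hS.iterate m).measure_preimage h_top.nullMeasurableSet
  have hE_iInter : ⋂ m, E m ⊆ {x | fwdHit B t x = ⊤} := fun x hx => by
    simp only [Set.mem_iInter, hE, Set.mem_ofPred_eq] at hx
    simpa [fwdHit_eq_firstHit, firstHit_eq_top_iff] using fun s => hx s 0
  rw [ae_iff] at hfwd ⊢
  simp only [ne_eq, not_not] at hfwd ⊢
  refine nonpos_iff_eq_zero.mp ?_
  calc μ {x | bwdHit B t x = ⊤} = ⨅ m, μ (E m) := by rw [iInf_congr hE_meas, iInf_const]; rfl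
    _ = μ (⋂ m, E m) := (hE_anti.measure_iInter
          (fun m => ((hS.iterate m).measurable h_top).nullMeasurableSet)
          ⟨0, measure_ne_top μ _⟩).symm
    _ ≤ 0 := hfwd ▸ measure_mono hE_iInter

theorem ae_notMem_eq_iUnion_skyscraperFloor {t : ℤ} (hfwd : ∀ᵐ x ∂μ, fwdHit B t x ≠ ⊤)
    (hbwd : ∀ᵐ x ∂μ, bwdHit B t x ≠ ⊤) :
    {x : ℤ → X | x t ∉ B} =ᵐ[μ] ⋃ p : ℕ × ℕ, skyscraperFloor B t (p.1 + 1) (p.2 + 1) := by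
  filter_upwards [hfwd, hbwd] with x hf hb
  obtain ⟨j, hj⟩ : ∃ j : ℕ, fwdHit B t x = j := exists_firstHit_eq_natCast hf
  obtain ⟨i, hi⟩ : ∃ i : ℕ, bwdHit B t x = i := exists_firstHit_eq_natCast hb
  have hxt : x t ∉ B ↔ i ≠ 0 ∧ j ≠ 0 := by
    rw [← Nat.cast_ne_zero (R := ℝ≥0∞), ← Nat.cast_ne_zero (R := ℝ≥0∞), ← hi, ← hj, ne_eq, ne_eq,
      bwdHit_eq_zero_iff, fwdHit_eq_zero_iff, and_self]
  apply propext
  change x t ∉ B ↔ x ∈ ⋃ p : ℕ × ℕ, skyscraperFloor B t (p.1 + 1) (p.2 + 1)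
  simp only [Set.mem_iUnion, skyscraperFloor, Set.mem_ofPred_eq, hi, hj, Nat.cast_inj, hxt]
  constructor
  · rintro ⟨hi0, hj0⟩
    exact ⟨(i - 1, j - 1), by omega, by omega⟩
  · rintro ⟨p, rfl, rfl⟩
    omega

theorem setLIntegral_notMem_eq_tsum {t : ℤ} (hfwd : ∀ᵐ x ∂μ, fwdHit B t x ≠ ⊤)
    (hbwd : ∀ᵐ x ∂μ, bwdHit B t x ≠ ⊤) (hB : MeasurableSet B) {f : (ℤ → X) → ℝ≥0∞}
    {v : ℕ → ℕ → ℝ≥0∞} (hv : ∀ i j, ∀ x ∈ skyscraperFloor B t (i + 1) (j + 1), f x = v i j) :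
    ∫⁻ x in {x | x t ∉ B}, f x ∂μ =
      ∑' p : ℕ × ℕ, v p.1 p.2 * μ (skyscraperFloor B t (p.1 + 1) (p.2 + 1)) := by
  rw [setLIntegral_congr (ae_notMem_eq_iUnion_skyscraperFloor hfwd hbwd),
    lintegral_iUnion (fun _ => measurableSet_skyscraperFloor hB _ _ _)
      (pairwise_disjoint_skyscraperFloor_succ_succ t)]
  refine tsum_congr fun p => ?_
  rw [setLIntegral_congr_fun (measurableSet_skyscraperFloor hB _ _ _) (hv p.1 p.2),
    setLIntegral_const, mul_comm]

theorem MeasureTheory.MeasurePreserving.setLIntegral_notMem_eq_tsum_antidiagonal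
    (hS : MeasurePreserving leftShift μ μ) (hB : MeasurableSet B) {t : ℤ}
    (hfwd : ∀ᵐ x ∂μ, fwdHit B t x ≠ ⊤) (hbwd : ∀ᵐ x ∂μ, bwdHit B t x ≠ ⊤)
    {f : (ℤ → X) → ℝ≥0∞} {v : ℕ → ℕ → ℝ≥0∞}
    (hv : ∀ i j, ∀ x ∈ skyscraperFloor B t (i + 1) (j + 1), f x = v i j) :
    ∫⁻ x in {x | x t ∉ B}, f x ∂μ =
      ∑' n, (∑ p ∈ antidiagonal n, v p.1 p.2) * μ (skyscraperFloor B t 1 (n + 1)) := by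
  rw [setLIntegral_notMem_eq_tsum hfwd hbwd hB hv, ← tsum_prod_mul_eq_tsum_sum_antidiagonal v]
  exact tsum_congr fun p => by rw [hS.measure_skyscraperFloor_succ_succ hB t p.1 p.2]

theorem MeasureTheory.MeasurePreserving.lintegral_transit_rpow_le [IsFiniteMeasure μ]
    (hS : MeasurePreserving leftShift μ μ) (hB : MeasurableSet B) (t : ℤ) {α : ℝ} (hα : 0 ≤ α) :
    ∫⁻ x, transit B t x ^ α ∂μ ≤ ENNReal.ofReal (α + 1) * ∫⁻ x, fwdHit B t x ^ α ∂μ := by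
  obtain rfl | hα := hα.eq_or_lt
  · simp
  by_cases hmom : ∫⁻ x, fwdHit B t x ^ α ∂μ = ⊤
  · rw [hmom, ENNReal.mul_top (ENNReal.ofReal_pos.mpr (by linarith)).ne']
    exact le_top
  have hfwd : ∀ᵐ x ∂μ, fwdHit B t x ≠ ⊤ :=
    (ae_lt_top ((measurable_fwdHit hB t).pow_const α) hmom).mono fun _ hx =>
      ((ENNReal.rpow_lt_top_iff_of_pos hα).mp hx).ne
  have hbwd := hS.ae_bwdHit_ne_top hB hfwd
  have hsupp : (fun x => transit B t x ^ α).support ⊆ {x | x t ∉ B} := fun x hx hxt =>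
    hx (show transit B t x ^ α = 0 by
      rw [transit_eq_zero_of_mem hxt, ENNReal.zero_rpow_of_pos hα])
  set q : ℕ → ℝ≥0∞ := fun n => μ (skyscraperFloor B t 1 (n + 1))
  calc ∫⁻ x, transit B t x ^ α ∂μ = ∫⁻ x in {x | x t ∉ B}, transit B t x ^ α ∂μ :=
        (setLIntegral_eq_of_support_subset hsupp).symm
    _ = ∑' n, (∑ p ∈ antidiagonal n, ((p.1 + p.2 + 1 : ℕ) : ℝ≥0∞) ^ α) * q n :=
      hS.setLIntegral_notMem_eq_tsum_antidiagonal hB hfwd hbwd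
        (v := fun i j => ((i + j + 1 : ℕ) : ℝ≥0∞) ^ α) fun _ _ _ hx => by
          rw [transit_of_mem_skyscraperFloor hx]
    _ ≤ ∑' n, (ENNReal.ofReal (α + 1) * ∑ p ∈ antidiagonal n, ((p.2 + 1 : ℕ) : ℝ≥0∞) ^ α) * q n :=
      ENNReal.tsum_le_tsum fun n => mul_le_mul_left (sum_antidiagonal_rpow_le hα.le n) _
    _ = ENNReal.ofReal (α + 1) *
          ∑' n, (∑ p ∈ antidiagonal n, ((p.2 + 1 : ℕ) : ℝ≥0∞) ^ α) * q n := by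
      simp_rw [mul_assoc, ENNReal.tsum_mul_left]
    _ = ENNReal.ofReal (α + 1) * ∫⁻ x in {x | x t ∉ B}, fwdHit B t x ^ α ∂μ := by
      rw [hS.setLIntegral_notMem_eq_tsum_antidiagonal hB hfwd hbwd
        (v := fun _ j => ((j + 1 : ℕ) : ℝ≥0∞) ^ α) fun _ _ _ hx => by rw [hx.2]]
    _ ≤ ENNReal.ofReal (α + 1) * ∫⁻ x, fwdHit B t x ^ α ∂μ :=
      mul_le_mul_right (setLIntegral_le_lintegral _ _) _

end Stationary

theorem stmt1 {N : ℕ} (μ : Measure (ℤ → (Fin N → ℝ))) [IsProbabilityMeasure μ]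
    (hErg : Ergodic (fun x (t : ℤ) => x (t + 1)) μ)
    (B : Set (Fin N → ℝ)) (hB : MeasurableSet B)
    (t : ℤ) (α : ℝ) (hα : 0 ≤ α)
    (hmom : ∫⁻ x, fwdHit B t x ^ α ∂μ < ⊤) :
    ∫⁻ x, transit B t x ^ α ∂μ
        ≤ ENNReal.ofReal (α + 1) * ∫⁻ x, fwdHit B t x ^ α ∂μ ∧
      ∫⁻ x, transit B t x ^ α ∂μ < ⊤ := by
  have h := hErg.toMeasurePreserving.lintegral_transit_rpow_le hB t hα
  exact ⟨h, h.trans_lt (ENNReal.mul_lt_top ENNReal.ofReal_lt_top hmom)⟩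
end

section
/- Let $V:\{0,\dots,T-1\}\to\mathbb{R}^N$, let $\widetilde\beta\subseteq\mathbb{R}^N$, and let $\Theta=\{\theta<T : V_\theta\in\widetilde\beta\}$ be nonempty with elements $\theta_1<\cdots<\theta_{|\Theta|}$, and set $\theta_{|\Theta|+1}=T+\theta_1$ and $\Delta\theta_i=\theta_{i+1}-\theta_i$. Define the looped hitting time $\widehat\tau(t)=\min\{s\ge 0 : V_{(t+s)\bmod T}\in\widetilde\beta\}$. Then for any function $f:\mathbb{N}\to\mathbb{R}$, $\frac{1}{T}\sum_{t=0}^{T-1} f(\widehat\tau(t)) = \sum_{i=1}^{|\Theta|}\sum_{j=0}^{\Delta\theta_i-1}\frac{f(j)}{T}$. -/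
/-!
Lift each `t < T` to the unique `u ∈ (θ 0, θ 0 + T]` with `u % T = t`. The window
`(θ 0, θ n]` is cut by the hitting times into the blocks `(θ i, θ (i + 1)]`, and on such a
block the looped hitting time of `u % T` is `θ (i + 1) - u`, which runs once through
`0, …, Δθ i - 1`.
-/

open Finset

theorem Nat.sInf_setOf_add_eq_sub {P : ℕ → Prop} {u b : ℕ} (hub : u ≤ b) (hb : P b)
    (hgap : ∀ m, u ≤ m → m < b → ¬ P m) : sInf {s | P (u + s)} = b - u := by
  have hmem : b - u ∈ {s | P (u + s)} := by simpa [Nat.add_sub_cancel' hub]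
  refine le_antisymm (Nat.sInf_le hmem) (le_csInf ⟨_, hmem⟩ fun s hs => ?_)
  by_contra! hs'
  exact hgap (u + s) (by omega) (by omega) hs

namespace Finset

variable {M : Type*} [AddCommMonoid M]

theorem sum_Ioc_mod_eq_sum_range (g : ℕ → M) (a T : ℕ) :
    ∑ u ∈ Ioc a (a + T), g (u % T) = ∑ t ∈ range T, g t := by
  rw [← Nat.image_Ico_mod (a + 1) T, sum_image (Nat.mod_injOn_Ico _ _), add_right_comm,
    Ico_add_one_add_one_eq_Ioc]

theorem sum_Ioc_eq_sum_range_sum_Ioc (g : ℕ → M) {θ : ℕ → ℕ} {n : ℕ}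
    (hθ : MonotoneOn θ (Set.Iic n)) :
    ∑ u ∈ Ioc (θ 0) (θ n), g u = ∑ i ∈ range n, ∑ u ∈ Ioc (θ i) (θ (i + 1)), g u := by
  induction n with
  | zero => simp
  | succ k ih =>
    have hk : k ∈ Set.Iic (k + 1) := Set.mem_Iic.2 k.le_succ
    rw [sum_range_succ, ← ih (hθ.mono (Set.Iic_subset_Iic.2 k.le_succ)),
      sum_Ioc_consecutive _ (hθ (by simp) hk (Nat.zero_le k))
        (hθ hk (by simp) k.le_succ)]

theorem sum_Ioc_sub_eq_sum_range (g : ℕ → M) {a b : ℕ} (hab : a ≤ b) :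
    ∑ u ∈ Ioc a b, g (b - u) = ∑ j ∈ range (b - a), g j :=
  sum_nbij' (b - ·) (b - ·) (by intro u; simp only [mem_Ioc, mem_range]; omega)
    (by intro j; simp only [mem_Ioc, mem_range]; omega)
    (by intro u; simp only [mem_Ioc]; omega)
    (by intro j; simp only [mem_range]; omega) (fun _ _ => rfl)

end Finset

theorem strictMonoOn_Iic_of_lt_add {θ : ℕ → ℕ} {n T : ℕ} (hmono : StrictMonoOn θ (Set.Iio n))
    (hlt : ∀ i < n, θ i < T) (hlast : θ n = T + θ 0) : StrictMonoOn θ (Set.Iic n) := by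
  intro a ha b hb hab
  rcases (Set.mem_Iic.1 hb).eq_or_lt with rfl | hbn
  · have := hlt a hab
    omega
  · exact hmono (lt_trans hab hbn) hbn hab

theorem apply_mod_notMem_of_mem_Ioo {X : Type*} {T n : ℕ} {V : ℕ → X} {B : Set X}
    {θ : ℕ → ℕ}
    (hθ : StrictMonoOn θ (Set.Iic n)) (hlt : ∀ i < n, θ i < T)
    (hall : ∀ s < T, V s ∈ B → ∃ i < n, θ i = s) (hlast : θ n = T + θ 0)
    {i m : ℕ} (hi : i < n) (hm : m ∈ Set.Ioo (θ i) (θ (i + 1))) : V (m % T) ∉ B := by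
  intro hmB
  obtain ⟨him, hmi⟩ := hm
  have hθ0 : θ 0 < T := hlt 0 (by omega)
  obtain ⟨k, hk, hkm⟩ := hall (m % T) (Nat.mod_lt _ (by omega)) hmB
  have hkn : k ∈ Set.Iic n := Set.mem_Iic.2 hk.le
  have hθn : θ (i + 1) ≤ θ n := hθ.monotoneOn (Set.mem_Iic.2 hi) (Set.mem_Iic.2 le_rfl) hi
  rcases lt_or_ge m T with hmT | hmT
  · rw [Nat.mod_eq_of_lt hmT] at hkm
    subst hkm
    have := (hθ.lt_iff_lt (Set.mem_Iic.2 hi.le) hkn).1 him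
    have := (hθ.lt_iff_lt hkn (Set.mem_Iic.2 hi)).1 hmi
    omega
  · -- then `m % T = m - T` would be a hit below `θ n - T = θ 0`
    have hmod : m % T = m - T := by rw [Nat.mod_eq_sub_mod hmT, Nat.mod_eq_of_lt (by omega)]
    have := hθ.monotoneOn (Set.mem_Iic.2 (Nat.zero_le n)) hkn (Nat.zero_le k)
    omega

theorem stmt3_general {X : Type*} (T : ℕ) (V : ℕ → X) (B : Set X)
    (n : ℕ) (hn : 0 < n) (θ : ℕ → ℕ)
    (hmono : StrictMonoOn θ (Set.Iio n))
    (hmem : ∀ i < n, θ i < T ∧ V (θ i) ∈ B)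
    (hall : ∀ s < T, V s ∈ B → ∃ i < n, θ i = s)
    (hlast : θ n = T + θ 0)
    (f : ℕ → ℝ) :
    (∑ t ∈ Finset.range T, f (sInf {s : ℕ | V ((t + s) % T) ∈ B})) / T
      = ∑ i ∈ Finset.range n, ∑ j ∈ Finset.range (θ (i + 1) - θ i), f j / T := by
  have hθ0 : θ 0 < T := (hmem 0 hn).1
  have hθ : StrictMonoOn θ (Set.Iic n) :=
    strictMonoOn_Iic_of_lt_add hmono (fun i hi => (hmem i hi).1) hlast
  have hlt : ∀ i < n, θ i < θ (i + 1) := fun i hi =>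
    hθ (Set.mem_Iic.2 hi.le) (Set.mem_Iic.2 hi) i.lt_succ_self
  have hhit : ∀ i < n, V (θ (i + 1) % T) ∈ B := by
    intro i hi
    rcases (Nat.add_one_le_of_lt hi).eq_or_lt with hin | hin
    · rw [hin, hlast, Nat.add_mod_left, Nat.mod_eq_of_lt hθ0]
      exact (hmem 0 hn).2
    · rw [Nat.mod_eq_of_lt (hmem _ hin).1]
      exact (hmem _ hin).2
  have hτ : ∀ i < n, ∀ u ∈ Ioc (θ i) (θ (i + 1)),
      sInf {s : ℕ | V ((u % T + s) % T) ∈ B} = θ (i + 1) - u := by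
    intro i hi u hu
    rw [mem_Ioc] at hu
    simp_rw [Nat.mod_add_mod]
    exact Nat.sInf_setOf_add_eq_sub (P := fun m => V (m % T) ∈ B) hu.2 (hhit i hi)
      fun m hum hm => apply_mod_notMem_of_mem_Ioo hθ (fun i hi => (hmem i hi).1) hall hlast hi
        ⟨by omega, hm⟩
  rw [← sum_Ioc_mod_eq_sum_range _ (θ 0), add_comm (θ 0), ← hlast,
    sum_Ioc_eq_sum_range_sum_Ioc _ hθ.monotoneOn, sum_div]
  refine sum_congr rfl fun i hi => ?_
  rw [← sum_div, sum_congr rfl fun u hu => congrArg f (hτ i (mem_range.1 hi) u hu),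
    sum_Ioc_sub_eq_sum_range _ (hlt i (mem_range.1 hi)).le]

/-- the looped hitting-time identity. With `Θ = {θ < T : V θ ∈ B}` nonempty,
listed in increasing order by `θ 0 < θ 1 < ⋯ < θ (n-1)` and `θ n = T + θ 0`,
gaps `Δθ i = θ (i+1) - θ i`, and looped hitting time
`τ̂(t) = min {s ≥ 0 : V ((t+s) mod T) ∈ B}`, we have
`(1/T) ∑_{t<T} f (τ̂ t) = ∑_{i<n} ∑_{j < Δθ i} f j / T`. -/
theorem stmt3 {X : Type*} (T : ℕ) (hT : 0 < T) (V : ℕ → X) (B : Set X)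
    (n : ℕ) (hn : 0 < n) (θ : ℕ → ℕ)
    (hmono : StrictMonoOn θ (Set.Iio n))
    (hmem : ∀ i < n, θ i < T ∧ V (θ i) ∈ B)
    (hall : ∀ s < T, V s ∈ B → ∃ i < n, θ i = s)
    (hlast : θ n = T + θ 0)
    (f : ℕ → ℝ) :
    (∑ t ∈ Finset.range T, f (sInf {s : ℕ | V ((t + s) % T) ∈ B})) / T
      = ∑ i ∈ Finset.range n, ∑ j ∈ Finset.range (θ (i + 1) - θ i), f j / T :=
  stmt3_general T V B n hn θ hmono hmem hall hlast f
end

section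
/- In the setting of the looped hitting time identity (finite sequence $V$ of length $T$, nonempty set $\Theta$ of times in $\widetilde\beta$, gaps $\Delta\theta_i$ with $\theta_{|\Theta|+1}=T+\theta_1$), one has $\frac{1}{T}\sum_{t=0}^{T-1}\widehat\tau(t)=\sum_{i=1}^{|\Theta|}\frac{\Delta\theta_i(\Delta\theta_i-1)}{2T}$ and $\frac{1}{T}\sum_{t=0}^{T-1}\widehat\tau(t)^2=\sum_{i=1}^{|\Theta|}\frac{\Delta\theta_i(\Delta\theta_i-1)(2\Delta\theta_i-1)}{6T}$. -/
/-!
The looped hitting time is `T`-periodic, and on each block `(θᵢ, θᵢ₊₁]` it equals `θᵢ₊₁ - t`,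
so along the block it runs through `Δθᵢ - 1, …, 1, 0`. Summing `f (τ̂ t)` over one period,
started just after `θ₀`, therefore gives `∑ᵢ ∑_{j < Δθᵢ} f j`; taking `f j = j` and `f j = j²`
yields the two moments.
-/

open Finset

theorem sum_range_natCast {K : Type*} [Field K] [CharZero K] (m : ℕ) :
    ∑ j ∈ range m, (j : K) = m * (m - 1) / 2 := by
  induction m with
  | zero => simp
  | succ k ih => rw [sum_range_succ, ih]; push_cast; ring

theorem sum_range_natCast_sq {K : Type*} [Field K] [CharZero K] (m : ℕ) :
    ∑ j ∈ range m, (j : K) ^ 2 = m * (m - 1) * (2 * m - 1) / 6 := by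
  induction m with
  | zero => simp
  | succ k ih => rw [sum_range_succ, ih]; push_cast; ring

theorem Finset.sum_Ioc_sub_eq_sum_range_s4 {M : Type*} [AddCommMonoid M] (f : ℕ → M) (a b : ℕ) :
    ∑ t ∈ Ioc a b, f (b - t) = ∑ j ∈ range (b - a), f j := by
  rw [← Ico_add_one_add_one_eq_Ioc, sum_Ico_reflect f _ le_rfl, range_eq_Ico,
    Nat.sub_self, Nat.add_sub_add_right]

theorem Finset.sum_Ioc_eq_sum_range_sum_Ioc_s4 {M : Type*} [AddCommMonoid M] (g : ℕ → M)
    {θ : ℕ → ℕ} {n : ℕ} (hθ : MonotoneOn θ (Set.Iic n)) :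
    ∑ t ∈ Ioc (θ 0) (θ n), g t = ∑ i ∈ range n, ∑ t ∈ Ioc (θ i) (θ (i + 1)), g t := by
  induction n with
  | zero => simp
  | succ k ih =>
    have hk : MonotoneOn θ (Set.Iic k) := hθ.mono (Set.Iic_subset_Iic.mpr k.le_succ)
    rw [sum_range_succ, ← ih hk, sum_Ioc_consecutive]
    · exact hθ (by simp) (by simp) k.zero_le
    · exact hθ (by simp) (by simp) k.le_succ

theorem Function.Periodic.sum_Ico_add_eq_sum_range {M : Type*} [AddCommMonoid M] {g : ℕ → M}
    {T : ℕ} (hg : Function.Periodic g T) (a : ℕ) :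
    ∑ t ∈ Ico a (a + T), g t = ∑ t ∈ range T, g t := by
  rcases T with _ | m
  · simp
  induction a with
  | zero => rw [zero_add, range_eq_Ico]
  | succ a ih =>
    calc ∑ t ∈ Ico (a + 1) (a + 1 + (m + 1)), g t
        = ∑ t ∈ Ico (a + 1) (a + (m + 1)), g t + g (a + (m + 1)) := by
          rw [show a + 1 + (m + 1) = a + (m + 1) + 1 by ring]
          exact sum_Ico_succ_top (by omega) g
      _ = g a + ∑ t ∈ Ico (a + 1) (a + (m + 1)), g t := by rw [hg a, add_comm]
      _ = ∑ t ∈ range (m + 1), g t := by rw [← sum_eq_sum_Ico_succ_bot (by omega), ih]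

theorem Nat.sInf_setOf_add_mem_eq_sub {S : Set ℕ} {t b : ℕ} (htb : t ≤ b) (hb : b ∈ S)
    (hgap : ∀ u, t ≤ u → u < b → u ∉ S) : sInf {s | t + s ∈ S} = b - t := by
  have hmem : b - t ∈ {s | t + s ∈ S} := by simpa [Nat.add_sub_cancel' htb] using hb
  refine le_antisymm (Nat.sInf_le hmem) (le_csInf ⟨_, hmem⟩ fun s hs => ?_)
  by_contra! hlt
  exact hgap (t + s) (by omega) (by omega) hs

/-- The paper's `τ̂(t)`, with `V` read cyclically through `% T`. -/
noncomputable def loopedHittingTime {X : Type*} (V : ℕ → X) (B : Set X) (T t : ℕ) : ℕ :=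
  sInf {s : ℕ | V ((t + s) % T) ∈ B}

theorem StrictMonoOn.Iic_of_forall_lt {α : Type*} [Preorder α] {f : ℕ → α} {n : ℕ}
    (hf : StrictMonoOn f (Set.Iio n)) (hlt : ∀ i < n, f i < f n) :
    StrictMonoOn f (Set.Iic n) := by
  intro i _ j hj hij
  rcases (Set.mem_Iic.mp hj).lt_or_eq with hj | rfl
  · exact hf (Set.mem_Iio.mpr (hij.trans hj)) hj hij
  · exact hlt i hij

section LoopedHittingTime

variable {X : Type*} {V : ℕ → X} {B : Set X} {T n : ℕ} {θ : ℕ → ℕ}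

theorem loopedHittingTime_periodic : Function.Periodic (loopedHittingTime V B T) T := by
  intro t
  simp only [loopedHittingTime, add_right_comm t T, Nat.add_mod_right]

theorem loopedHittingTime_eq_sub (hθ : StrictMonoOn θ (Set.Iic n))
    (hmem : ∀ i < n, θ i < T ∧ V (θ i) ∈ B) (hall : ∀ s < T, V s ∈ B → ∃ i < n, θ i = s)
    (hlast : θ n = T + θ 0) {i t : ℕ} (hi : i < n) (ht : t ∈ Ioc (θ i) (θ (i + 1))) :
    loopedHittingTime V B T t = θ (i + 1) - t := by
  obtain ⟨hit, hti⟩ := mem_Ioc.mp ht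
  have hθ0 : θ 0 < T := (hmem 0 (by omega)).1
  have hθn : θ (i + 1) ≤ θ n := hθ.monotoneOn (by simp; omega) (by simp) (by omega)
  refine Nat.sInf_setOf_add_mem_eq_sub (S := {u | V (u % T) ∈ B}) hti ?_ ?_
  · show V (θ (i + 1) % T) ∈ B
    rcases Nat.lt_or_ge (i + 1) n with h | h
    · rw [Nat.mod_eq_of_lt (hmem _ h).1]
      exact (hmem _ h).2
    · rw [show i + 1 = n by omega, hlast, Nat.add_mod_left, Nat.mod_eq_of_lt hθ0]
      exact (hmem 0 (by omega)).2
  -- A visit to `B` inside the block is some `θⱼ`, or, past `T`, a time `θⱼ + T` with `θⱼ < θ₀`.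
  · intro u htu hub hu
    obtain ⟨j, hj, hju⟩ := hall _ (Nat.mod_lt _ (by omega)) hu
    rcases lt_or_ge u T with huT | huT
    · rw [Nat.mod_eq_of_lt huT] at hju
      have hij : i < j := (hθ.lt_iff_lt (by simp; omega) (by simp; omega)).mp (by omega)
      have hji : j < i + 1 := (hθ.lt_iff_lt (by simp; omega) (by simp; omega)).mp (by omega)
      omega
    · have hmod : u % T = u - T := by
        rw [Nat.mod_eq_sub_mod huT, Nat.mod_eq_of_lt (by omega)]
      have := hθ.monotoneOn (by simp) (by simp; omega) j.zero_le
      omega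

theorem sum_range_comp_loopedHittingTime {M : Type*} [AddCommMonoid M] (f : ℕ → M)
    (hmono : StrictMonoOn θ (Set.Iio n)) (hmem : ∀ i < n, θ i < T ∧ V (θ i) ∈ B)
    (hall : ∀ s < T, V s ∈ B → ∃ i < n, θ i = s) (hlast : θ n = T + θ 0) :
    ∑ t ∈ range T, f (loopedHittingTime V B T t)
      = ∑ i ∈ range n, ∑ j ∈ range (θ (i + 1) - θ i), f j := by
  have hθ : StrictMonoOn θ (Set.Iic n) :=
    hmono.Iic_of_forall_lt fun i hi => by have := (hmem i hi).1; omega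
  calc ∑ t ∈ range T, f (loopedHittingTime V B T t)
      = ∑ t ∈ Ioc (θ 0) (θ n), f (loopedHittingTime V B T t) := by
        rw [hlast, ← Ico_add_one_add_one_eq_Ioc, add_comm T, add_right_comm]
        exact ((loopedHittingTime_periodic.comp f).sum_Ico_add_eq_sum_range _).symm
    _ = ∑ i ∈ range n, ∑ t ∈ Ioc (θ i) (θ (i + 1)), f (loopedHittingTime V B T t) :=
        sum_Ioc_eq_sum_range_sum_Ioc_s4 _ hθ.monotoneOn
    _ = ∑ i ∈ range n, ∑ t ∈ Ioc (θ i) (θ (i + 1)), f (θ (i + 1) - t) :=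
        sum_congr rfl fun i hi => sum_congr rfl fun t ht => by
          rw [loopedHittingTime_eq_sub hθ hmem hall hlast (mem_range.mp hi) ht]
    _ = ∑ i ∈ range n, ∑ j ∈ range (θ (i + 1) - θ i), f j :=
        sum_congr rfl fun i _ => sum_Ioc_sub_eq_sum_range_s4 f _ _

end LoopedHittingTime

theorem stmt4_general {X : Type*} (T : ℕ) (V : ℕ → X) (B : Set X)
    (n : ℕ) (θ : ℕ → ℕ)
    (hmono : StrictMonoOn θ (Set.Iio n))
    (hmem : ∀ i < n, θ i < T ∧ V (θ i) ∈ B)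
    (hall : ∀ s < T, V s ∈ B → ∃ i < n, θ i = s)
    (hlast : θ n = T + θ 0) :
    (∑ t ∈ Finset.range T, ((sInf {s : ℕ | V ((t + s) % T) ∈ B} : ℕ) : ℝ)) / T
        = ∑ i ∈ Finset.range n,
            ((θ (i + 1) - θ i : ℕ) : ℝ) * (((θ (i + 1) - θ i : ℕ) : ℝ) - 1) / (2 * T) ∧
      (∑ t ∈ Finset.range T, ((sInf {s : ℕ | V ((t + s) % T) ∈ B} : ℕ) : ℝ) ^ 2) / T
        = ∑ i ∈ Finset.range n,
            ((θ (i + 1) - θ i : ℕ) : ℝ) * (((θ (i + 1) - θ i : ℕ) : ℝ) - 1) *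
              (2 * ((θ (i + 1) - θ i : ℕ) : ℝ) - 1) / (6 * T) := by
  have hsum (f : ℕ → ℝ) := sum_range_comp_loopedHittingTime f hmono hmem hall hlast
  simp only [loopedHittingTime] at hsum
  rw [hsum Nat.cast, hsum (· ^ 2), sum_div, sum_div]
  simp only [sum_range_natCast, sum_range_natCast_sq, div_div, and_self]

/-- in the looped hitting time setting, the first and second empirical
moments are `∑ᵢ Δθᵢ(Δθᵢ-1)/(2T)` and `∑ᵢ Δθᵢ(Δθᵢ-1)(2Δθᵢ-1)/(6T)` respectively. -/
theorem stmt4 {X : Type*} (T : ℕ) (hT : 0 < T) (V : ℕ → X) (B : Set X)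
    (n : ℕ) (hn : 0 < n) (θ : ℕ → ℕ)
    (hmono : StrictMonoOn θ (Set.Iio n))
    (hmem : ∀ i < n, θ i < T ∧ V (θ i) ∈ B)
    (hall : ∀ s < T, V s ∈ B → ∃ i < n, θ i = s)
    (hlast : θ n = T + θ 0) :
    (∑ t ∈ Finset.range T, ((sInf {s : ℕ | V ((t + s) % T) ∈ B} : ℕ) : ℝ)) / T
        = ∑ i ∈ Finset.range n,
            ((θ (i + 1) - θ i : ℕ) : ℝ) * (((θ (i + 1) - θ i : ℕ) : ℝ) - 1) / (2 * T) ∧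
      (∑ t ∈ Finset.range T, ((sInf {s : ℕ | V ((t + s) % T) ∈ B} : ℕ) : ℝ) ^ 2) / T
        = ∑ i ∈ Finset.range n,
            ((θ (i + 1) - θ i : ℕ) : ℝ) * (((θ (i + 1) - θ i : ℕ) : ℝ) - 1) *
              (2 * ((θ (i + 1) - θ i : ℕ) : ℝ) - 1) / (6 * T) :=
  stmt4_general T V B n θ hmono hmem hall hlast
end
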